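/- Let G₁ and G₂ be finite simple graphs with n₁, n₂ vertices and m₁, m₂ edges. Then F(G₁[G₂]) = n₂⁴F(G₁) + n₁F(G₂) + 6n₂²m₂M₁(G₁) + 6n₂m₁M₁(G₂), where G₁[G₂] is the lexicographic product (composition). -/

import Mathlib

open Finset

/-- Degree of a vertex: the number of its neighbors. -/
noncomputable def degN {V : Type*} (G : SimpleGraph V) (v : V) : ℕ :=
  Nat.card (G.neighborSet v)

/-- F-index: the sum of cubes of the vertex degrees. -/
noncomputable def Findex {V : Type*} [Fintype V] (G : SimpleGraph V) : ℕ :=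
  ∑ v, (degN G v) ^ 3

/-- First Zagreb index: the sum of squares of the vertex degrees. -/
noncomputable def zagrebM1 {V : Type*} [Fintype V] (G : SimpleGraph V) : ℕ :=
  ∑ v, (degN G v) ^ 2

/-- Number of edges of a graph. -/
noncomputable def numEdges {V : Type*} (G : SimpleGraph V) : ℕ :=
  Nat.card G.edgeSet

/-- Lexicographic product (composition) of two simple graphs. -/
def graphLex {V₁ V₂ : Type*} (G₁ : SimpleGraph V₁) (G₂ : SimpleGraph V₂) :
    SimpleGraph (V₁ × V₂) where
  Adj x y := G₁.Adj x.1 y.1 ∨ (x.1 = y.1 ∧ G₂.Adj x.2 y.2)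
  symm := by
    refine ⟨?_⟩
    rintro ⟨a, b⟩ ⟨c, d⟩ (h | ⟨h1, h2⟩)
    · exact Or.inl h.symm
    · exact Or.inr ⟨h1.symm, h2.symm⟩
  loopless := by
    refine ⟨?_⟩
    rintro ⟨a, b⟩ (h | ⟨_, h2⟩)
    · exact G₁.loopless.irrefl a h
    · exact G₂.loopless.irrefl b h2

/-! The degree of `(a, b)` in `G₁[G₂]` is `n₂ d(a) + d(b)`; expanding its cube and summing first
over the fibre `{a} × V₂` turns the `d(b)`-moments into `2 m₂`, `M₁(G₂)` and `F(G₂)`, and summing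
the result over `a` turns the `d(a)`-moments into `F(G₁)`, `M₁(G₁)` and `2 m₁`. -/

theorem Finset.sum_add_pow_three {ι R : Type*} [CommSemiring R] (s : Finset ι) (c : R)
    (x : ι → R) :
    ∑ i ∈ s, (c + x i) ^ 3 =
      #s * c ^ 3 + 3 * c ^ 2 * ∑ i ∈ s, x i + 3 * c * ∑ i ∈ s, x i ^ 2 + ∑ i ∈ s, x i ^ 3 := by
  have expand (y : R) : (c + y) ^ 3 = c ^ 3 + 3 * c ^ 2 * y + 3 * c * y ^ 2 + y ^ 3 := by ring
  simp only [expand, sum_add_distrib, ← mul_sum, sum_const, nsmul_eq_mul]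

lemma degN_eq_degree {V : Type*} [Fintype V] (G : SimpleGraph V) [DecidableRel G.Adj] (v : V) :
    degN G v = G.degree v := by
  rw [degN, Nat.card_eq_fintype_card, SimpleGraph.card_neighborSet_eq_degree]

lemma sum_degN {V : Type*} [Fintype V] (G : SimpleGraph V) :
    ∑ v, degN G v = 2 * numEdges G := by
  classical
  simp only [degN_eq_degree]
  rw [SimpleGraph.sum_degrees_eq_twice_card_edges, numEdges, Nat.card_eq_fintype_card,
    SimpleGraph.edgeFinset_card]

lemma degN_graphLex {V₁ V₂ : Type*} [Fintype V₁] [Fintype V₂]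
    (G₁ : SimpleGraph V₁) (G₂ : SimpleGraph V₂) (a : V₁) (b : V₂) :
    degN (graphLex G₁ G₂) (a, b) = Fintype.card V₂ * degN G₁ a + degN G₂ b := by
  classical
  have neighbors : (graphLex G₁ G₂).neighborFinset (a, b) =
      G₁.neighborFinset a ×ˢ univ ∪ {a} ×ˢ G₂.neighborFinset b := by
    ext ⟨c, d⟩
    rw [SimpleGraph.mem_neighborFinset]
    simp [graphLex, eq_comm, and_comm]
  have disjoint : Disjoint (G₁.neighborFinset a ×ˢ (univ : Finset V₂))
      ({a} ×ˢ G₂.neighborFinset b) :=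
    disjoint_product.mpr (Or.inl (disjoint_singleton_right.mpr (G₁.notMem_neighborFinset_self a)))
  rw [degN_eq_degree, degN_eq_degree, degN_eq_degree, ← SimpleGraph.card_neighborFinset_eq_degree,
    neighbors, card_union_of_disjoint disjoint, card_product, card_product,
    card_univ, card_singleton, one_mul, mul_comm, SimpleGraph.card_neighborFinset_eq_degree,
    SimpleGraph.card_neighborFinset_eq_degree]

lemma sum_degN_graphLex_pow_three {V₁ V₂ : Type*} [Fintype V₁] [Fintype V₂]
    (G₁ : SimpleGraph V₁) (G₂ : SimpleGraph V₂) (a : V₁) :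
    ∑ b, degN (graphLex G₁ G₂) (a, b) ^ 3 =
      Fintype.card V₂ ^ 4 * degN G₁ a ^ 3
        + 6 * Fintype.card V₂ ^ 2 * numEdges G₂ * degN G₁ a ^ 2
        + 3 * Fintype.card V₂ * zagrebM1 G₂ * degN G₁ a + Findex G₂ := by
  simp only [degN_graphLex]
  rw [sum_add_pow_three, sum_degN, card_univ, Nat.cast_id, zagrebM1, Findex]
  ring

theorem Findex_lex {V₁ V₂ : Type*} [Fintype V₁] [Fintype V₂]
    (G₁ : SimpleGraph V₁) (G₂ : SimpleGraph V₂)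
    (n₁ n₂ m₁ m₂ : ℕ) (hn₁ : Fintype.card V₁ = n₁) (hn₂ : Fintype.card V₂ = n₂)
    (hm₁ : numEdges G₁ = m₁) (hm₂ : numEdges G₂ = m₂) :
    Findex (graphLex G₁ G₂) =
      n₂ ^ 4 * Findex G₁ + n₁ * Findex G₂ + 6 * n₂ ^ 2 * m₂ * zagrebM1 G₁
        + 6 * n₂ * m₁ * zagrebM1 G₂ := by
  subst hn₁ hn₂ hm₁ hm₂
  rw [Findex, Fintype.sum_prod_type]
  simp only [sum_degN_graphLex_pow_three, sum_add_distrib, ← mul_sum, sum_const,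
    card_univ, smul_eq_mul, sum_degN]
  simp only [Findex, zagrebM1]
  ring
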